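/- Let θ be an antimorphic involution and w ∈ Σ+. If w^{n₁} is a θ-palindrome for some n₁ ≥ 1, then w^{n₂} is a θ-palindrome for every n₂ ≥ 1. -/
import Mathlib


variable {α : Type*}

/-- θ is an antimorphic involution on Σ* : θ(uv) = θ(v)θ(u) and θ² = id. -/
def IsAntimorphicInvolution (θ : List α → List α) : Prop :=
  (∀ u v : List α, θ (u ++ v) = θ v ++ θ u) ∧ ∀ u : List α, θ (θ u) = u

/-- The set of θ-conjugates of w: C_θ(w) = { θ(v) ++ u : w = u ++ v }. -/
def thetaConjugates (θ : List α → List α) (w : List α) : Set (List α) :=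
  {x | ∃ u v : List α, w = u ++ v ∧ x = θ v ++ u}

/-- n-fold concatenation power of a word. -/
def listPow (z : List α) (n : ℕ) : List α := (List.replicate n z).flatten

/-- A word is primitive if it is not a proper power. -/
def Primitive (z : List α) : Prop :=
  z ≠ [] ∧ ∀ (t : List α) (k : ℕ), z = listPow t k → k = 1

/-- The conjugacy class of w: { v ++ u : w = u ++ v }. -/
def conjClass (w : List α) : Set (List α) := {x | ∃ u v : List α, w = u ++ v ∧ x = v ++ u}

lemma theta_nil {θ : List α → List α} (hθ : IsAntimorphicInvolution θ) : θ [] = [] := by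
  have := hθ.1 [] []
  simp at this
  have hlen := congrArg List.length this
  simp at hlen
  simpa [List.length_eq_zero_iff] using hlen.symm

lemma listPow_succ (z : List α) (n : ℕ) : listPow z (n+1) = z ++ listPow z n := by
  simp [listPow, List.replicate_succ]

lemma listPow_length (z : List α) (n : ℕ) : (listPow z n).length = n * z.length := by
  simp [listPow, Nat.mul_comm]

lemma theta_listPow {θ : List α → List α} (hθ : IsAntimorphicInvolution θ)
    (z : List α) (n : ℕ) : θ (listPow z n) = listPow (θ z) n := by
  induction n with
  | zero => simpa [listPow] using theta_nil hθ
  | succ k ih =>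
    have h1 : listPow z (k+1) = listPow z k ++ z := by
      simp [listPow, List.replicate_succ']
    rw [h1, hθ.1, ih, listPow_succ]

theorem stmt8 (θ : List α → List α) (hθ : IsAntimorphicInvolution θ)
    (w : List α) (hw : w ≠ []) (n₁ : ℕ) (hn₁ : 1 ≤ n₁)
    (h : θ (listPow w n₁) = listPow w n₁) :
    ∀ n₂ : ℕ, 1 ≤ n₂ → θ (listPow w n₂) = listPow w n₂ := by
  have key : θ w = w := by
    rw [theta_listPow hθ] at h
    have hlen : (θ w).length = w.length := by
      have := congrArg List.length h
      rw [listPow_length, listPow_length] at this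
      exact Nat.eq_of_mul_eq_mul_left (lt_of_lt_of_le Nat.zero_lt_one hn₁) this
    obtain ⟨k, rfl⟩ := Nat.exists_eq_add_of_le hn₁
    rw [Nat.add_comm, listPow_succ, listPow_succ] at h
    exact (List.append_inj h hlen).1
  intro n₂ _
  rw [theta_listPow hθ, key]
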